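/- Let (S,R) be a PRAX and R^# the transitive closure of R. For B ⊆ S define the l-scedastic approximation B^{l̂} = (B^l ∖ B^{l_#})^l. Then for every B ⊆ S: ((B^l ∖ B^{l_#})^l)^{l_#} = ∅, and consequently the l-scedastic approximation is idempotent: B^{l̂ l̂} = B^{l̂}. -/

import Mathlib

/-- `R` is proto-transitive. -/
def ProtoTransitive {S : Type*} (R : S → S → Prop) : Prop :=
  ∀ x y z : S, x ≠ y → y ≠ z → R x y → R y x → R y z → R z y → R x z

/-- Successor neighborhood `[x] = {y | R y x}`. -/
def nbhd {S : Type*} (R : S → S → Prop) (x : S) : Set S := {y | R y x}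

/-- Symmetrized successor neighborhood `[x]ₒ = {y | R y x ∧ R x y}`. -/
def nbhdO {S : Type*} (R : S → S → Prop) (x : S) : Set S := {y | R y x ∧ R x y}

/-- Lower proto approximation `A^l = ⋃ {[x] | [x] ⊆ A}`. -/
def lowerP {S : Type*} (R : S → S → Prop) (A : Set S) : Set S :=
  {z | ∃ x : S, z ∈ nbhd R x ∧ nbhd R x ⊆ A}

/-- Upper proto approximation `A^u = ⋃ {[x] | [x] ∩ A ≠ ∅}`. -/
def upperP {S : Type*} (R : S → S → Prop) (A : Set S) : Set S :=
  {z | ∃ x : S, z ∈ nbhd R x ∧ (nbhd R x ∩ A).Nonempty}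

/-- Symmetrized lower proto approximation `A^{l_o}`. -/
def lowerO {S : Type*} (R : S → S → Prop) (A : Set S) : Set S :=
  {z | ∃ x : S, z ∈ nbhdO R x ∧ nbhdO R x ⊆ A}

/-- Symmetrized upper proto approximation `A^{u_o}`. -/
def upperO {S : Type*} (R : S → S → Prop) (A : Set S) : Set S :=
  {z | ∃ x : S, z ∈ nbhdO R x ∧ (nbhdO R x ∩ A).Nonempty}

/-- Point-wise lower approximation `A^{l+} = {x | [x] ⊆ A}`. -/
def lPlus {S : Type*} (R : S → S → Prop) (A : Set S) : Set S :=
  {x | nbhd R x ⊆ A}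

/-- Point-wise upper approximation `A^{u+} = {x | [x] ∩ A ≠ ∅}`. -/
def uPlus {S : Type*} (R : S → S → Prop) (A : Set S) : Set S :=
  {x | (nbhd R x ∩ A).Nonempty}

/-- `[x]_# = {y | R^# y x}`, where `R^#` is the transitive closure of `R`. -/
def nbhdT {S : Type*} (R : S → S → Prop) (x : S) : Set S :=
  {y | Relation.TransGen R y x}

/-- Lower approximation `A^{l_#}` with respect to the transitive closure `R^#`. -/
def lowerT {S : Type*} (R : S → S → Prop) (A : Set S) : Set S :=
  {z | ∃ x : S, z ∈ nbhdT R x ∧ nbhdT R x ⊆ A}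

/-- Upper approximation `A^{u_#}` with respect to the transitive closure `R^#`. -/
def upperT {S : Type*} (R : S → S → Prop) (A : Set S) : Set S :=
  {z | ∃ x : S, z ∈ nbhdT R x ∧ (nbhdT R x ∩ A).Nonempty}

/-- The l-scedastic approximation `B^{l̂} = (B^l ∖ B^{l_#})^l`. -/
def lHat {S : Type*} (R : S → S → Prop) (B : Set S) : Set S :=
  lowerP R (lowerP R B \ lowerT R B)

/-!
If `[x]_# ⊆ A ∖ A^{l_#}`, then `[x]_# ⊆ A` puts `x` in `A^{l_#}`,
while `x ∈ [x]_#` keeps it out; so `(A ∖ A^{l_#})^{l_#} = ∅`. Since `B^{l̂} ⊆ B ∖ B^{l_#}`,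
monotonicity gives `(B^{l̂})^{l_#} = ∅`, and then `B^{l̂ l̂} = ((B^{l̂})^l)^l = B^{l̂}` because
`(·)^l` is idempotent.
-/

section

variable {S : Type*} (R : S → S → Prop)

theorem lowerP_subset (A : Set S) : lowerP R A ⊆ A := by
  rintro z ⟨x, hz, hsub⟩
  exact hsub hz

theorem lowerP_lowerP (A : Set S) : lowerP R (lowerP R A) = lowerP R A := by
  refine (lowerP_subset R _).antisymm ?_
  rintro z ⟨x, hz, hsub⟩
  exact ⟨x, hz, fun y hy => ⟨x, hy, hsub⟩⟩

theorem lowerT_mono {A C : Set S} (h : A ⊆ C) : lowerT R A ⊆ lowerT R C := by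
  rintro z ⟨x, hz, hsub⟩
  exact ⟨x, hz, hsub.trans h⟩

theorem lHat_subset_diff_lowerT (B : Set S) : lHat R B ⊆ B \ lowerT R B :=
  (lowerP_subset R _).trans (Set.sdiff_subset_sdiff_left (lowerP_subset R B))

theorem lowerT_diff_lowerT_eq_empty (hrefl : ∀ x : S, R x x) (A : Set S) :
    lowerT R (A \ lowerT R A) = ∅ := by
  refine Set.eq_empty_iff_forall_notMem.2 ?_
  rintro z ⟨x, -, hsub⟩
  have hx : x ∈ nbhdT R x := Relation.TransGen.single (hrefl x)
  exact (hsub hx).2 ⟨x, hx, hsub.trans Set.sdiff_subset⟩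

end

theorem lHat_idempotent_general {S : Type*} (R : S → S → Prop)
    (hrefl : ∀ x : S, R x x) (B : Set S) :
    lowerT R (lHat R B) = ∅ ∧ lHat R (lHat R B) = lHat R B := by
  have hempty : lowerT R (lHat R B) = ∅ :=
    Set.subset_eq_empty (lowerT_mono R (lHat_subset_diff_lowerT R B))
      (lowerT_diff_lowerT_eq_empty R hrefl B)
  refine ⟨hempty, ?_⟩
  calc lHat R (lHat R B) = lowerP R (lowerP R (lHat R B)) := by
        rw [lHat, hempty, Set.sdiff_empty]
    _ = lHat R B := by rw [lowerP_lowerP, lHat, lowerP_lowerP]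

/-- in a PRAX, `((B^l ∖ B^{l_#})^l)^{l_#} = ∅`, and hence the
l-scedastic approximation is idempotent: `B^{l̂ l̂} = B^{l̂}`. -/
theorem lHat_idempotent {S : Type*} (R : S → S → Prop)
    (hrefl : ∀ x : S, R x x) (hproto : ProtoTransitive R) (B : Set S) :
    lowerT R (lHat R B) = ∅ ∧ lHat R (lHat R B) = lHat R B :=
  lHat_idempotent_general R hrefl B
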